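/- Let X = (X₁,…,Xₙ) be a random string of n bits, and let Y be obtained from X by flipping each bit independently with probability p, 0 < p < 1/2. Then I(Y) ≤ (1−2p)²·I(X), where I(Z) = n − H(Z) and H is Shannon entropy in bits. -/

import Mathlib

open Finset

/-- Shannon entropy (in bits) of a probability mass function on a finite type. -/
noncomputable def shannonEnt {α : Type*} [Fintype α] (μ : α → ℝ) : ℝ :=
  ∑ x : α, -(μ x * Real.logb 2 (μ x))

/-- The distribution of the `n`-bit string obtained by flipping each bit of a string
distributed according to `μ` independently with probability `p`. -/
noncomputable def flipDist {n : ℕ} (p : ℝ) (μ : (Fin n → Bool) → ℝ) :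
    (Fin n → Bool) → ℝ :=
  fun y => ∑ x : Fin n → Bool, μ x * ∏ i : Fin n, (if y i = x i then 1 - p else p)

/-!
Work in nats with an information functional `info` that is homogeneous of degree one and,
by concavity of `negMulLog`, subadditive on nonnegative vectors. For bit strings it splits
exactly into the information of the first bit plus that of the two slices of the tail. The
flipped tail slices are mixtures, with weights `1 - p` and `p`, of the flipped slices of the
input, so subadditivity and induction on `n` reduce the claim to a single bit. There it reads
`log 2 - h ((1 + l s) / 2) ≤ l ^ 2 * (log 2 - h ((1 + s) / 2))` with `l = 1 - 2 p`, and follows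
by differentiating in `s`: the derivative of the left side is `l * artanh (l s)`, and
`artanh (l s) ≤ l * artanh s` termwise in the power series.
-/

open Real

lemma log_one_add_sub_log_one_sub_mul_le {l s : ℝ} (hl0 : 0 ≤ l) (hl1 : l ≤ 1) (hs0 : 0 ≤ s)
    (hs1 : s < 1) :
    log (1 + l * s) - log (1 - l * s) ≤ l * (log (1 + s) - log (1 - s)) := by
  have hls : |l * s| < 1 := by rw [abs_of_nonneg (by positivity)]; nlinarith
  refine hasSum_le (fun k => ?_) (hasSum_log_sub_log_of_abs_lt_one hls)
    ((hasSum_log_sub_log_of_abs_lt_one (by rwa [abs_of_nonneg hs0])).mul_left l)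
  rw [mul_pow, mul_left_comm l]
  gcongr
  exact pow_le_of_le_one hl0 hl1 (by omega)

lemma hasDerivAt_binEntropy_one_add_div_two {u : ℝ} (hu : |u| < 1) :
    HasDerivAt (fun x => binEntropy ((1 + x) / 2)) ((log (1 - u) - log (1 + u)) / 2) u := by
  obtain ⟨hu0, hu1⟩ := abs_lt.1 hu
  have h := (hasDerivAt_binEntropy (p := (1 + u) / 2) (by linarith) (by linarith)).comp u
    (((hasDerivAt_id u).const_add 1).div_const 2)
  refine h.congr_deriv ?_
  rw [show 1 - (1 + u) / 2 = (1 - u) / 2 by ring, log_div (by linarith) two_ne_zero,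
    log_div (by linarith) two_ne_zero]
  ring

lemma log_two_sub_binEntropy_mul_le_of_nonneg {l s : ℝ} (hl0 : 0 ≤ l) (hl1 : l ≤ 1)
    (hs0 : 0 ≤ s) (hs1 : s ≤ 1) :
    log 2 - binEntropy ((1 + l * s) / 2) ≤ l ^ 2 * (log 2 - binEntropy ((1 + s) / 2)) := by
  set G : ℝ → ℝ := fun u =>
    l ^ 2 * (log 2 - binEntropy ((1 + u) / 2)) - (log 2 - binEntropy ((1 + l * u) / 2))
  have hG' : ∀ u ∈ Set.Ioo (0 : ℝ) 1, HasDerivAt G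
      (l / 2 * (l * (log (1 + u) - log (1 - u)) - (log (1 + l * u) - log (1 - l * u)))) u := by
    rintro u ⟨hu0, hu1⟩
    have hu : |u| < 1 := by rw [abs_of_pos hu0]; exact hu1
    have hlu : |l * u| < 1 := by rw [abs_of_nonneg (by positivity)]; nlinarith
    have h1 := hasDerivAt_binEntropy_one_add_div_two hu
    have h2 := (hasDerivAt_binEntropy_one_add_div_two hlu).comp u ((hasDerivAt_id u).const_mul l)
    exact (((h1.const_sub _).const_mul _).sub (h2.const_sub _)).congr_deriv (by simp; ring)
  have hmono : MonotoneOn G (Set.Icc 0 1) := by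
    refine monotoneOn_of_hasDerivWithinAt_nonneg (convex_Icc 0 1) (by fun_prop)
      (fun u hu => (hG' u (by rwa [interior_Icc] at hu)).hasDerivWithinAt) fun u hu => ?_
    rw [interior_Icc] at hu
    have := log_one_add_sub_log_one_sub_mul_le hl0 hl1 hu.1.le hu.2
    have : 0 ≤ l / 2 := by positivity
    nlinarith
  have hG0 : G 0 = 0 := by
    simp only [G, mul_zero, add_zero, show (1 : ℝ) / 2 = 2⁻¹ by norm_num, binEntropy_two_inv]
    ring
  have := hmono ⟨le_rfl, zero_le_one⟩ ⟨hs0, hs1⟩ hs0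
  simp only [hG0, G] at this
  linarith

lemma log_two_sub_binEntropy_mul_le {l s : ℝ} (hl : |l| ≤ 1) (hs : |s| ≤ 1) :
    log 2 - binEntropy ((1 + l * s) / 2) ≤ l ^ 2 * (log 2 - binEntropy ((1 + s) / 2)) := by
  have heven (x : ℝ) : binEntropy ((1 + x) / 2) = binEntropy ((1 + |x|) / 2) := by
    rcases abs_choice x with h | h <;> rw [h]
    rw [← binEntropy_one_sub]
    ring_nf
  rw [heven (l * s), heven s, abs_mul, ← sq_abs l]
  exact log_two_sub_binEntropy_mul_le_of_nonneg (abs_nonneg l) hl (abs_nonneg s) hs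

/-- For a probability vector this is `log (card α) - H`, i.e. the paper's `I` in nats. The term
`negMulLog (∑ x, f x)` makes it homogeneous of degree one on unnormalised vectors. -/
noncomputable def info {α : Type*} [Fintype α] (f : α → ℝ) : ℝ :=
  (∑ x, f x) * log (Fintype.card α) - ∑ x, negMulLog (f x) + negMulLog (∑ x, f x)

section Info

variable {α : Type*} [Fintype α]

@[simp] lemma info_zero : info (0 : α → ℝ) = 0 := by simp [info]

lemma info_smul (c : ℝ) (f : α → ℝ) : info (c • f) = c * info f := by
  simp only [info, Pi.smul_apply, smul_eq_mul, negMulLog_mul, ← mul_sum, sum_add_distrib,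
    ← sum_mul]
  ring

lemma info_of_sum_eq_one {f : α → ℝ} (hf : ∑ x, f x = 1) :
    info f = log (Fintype.card α) - ∑ x, negMulLog (f x) := by
  simp [info, hf]

lemma info_eq_mul_of_sum_ne_zero {f : α → ℝ} (hf : ∑ x, f x ≠ 0) :
    info f = (∑ x, f x) * (log (Fintype.card α) - ∑ x, negMulLog ((∑ x, f x)⁻¹ * f x)) := by
  conv_lhs => rw [← smul_inv_smul₀ hf f]
  rw [info_smul, info_of_sum_eq_one]
  · rfl
  · simp [← mul_sum, hf]

lemma info_of_unique [Unique α] (f : α → ℝ) : info f = 0 := by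
  simp [info]

lemma mul_negMulLog_inv_mul_add_le {a b u v : ℝ} (ha : 0 < a) (hb : 0 < b) (hu : 0 ≤ u)
    (hv : 0 ≤ v) :
    a * negMulLog (a⁻¹ * u) + b * negMulLog (b⁻¹ * v)
      ≤ (a + b) * negMulLog ((a + b)⁻¹ * (u + v)) := by
  have hab : 0 < a + b := by positivity
  have hab' : a + b ≠ 0 := hab.ne'
  have h := concaveOn_negMulLog.2 (Set.mem_Ici.2 (by positivity : 0 ≤ a⁻¹ * u))
    (Set.mem_Ici.2 (by positivity : 0 ≤ b⁻¹ * v)) (div_nonneg ha.le hab.le)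
    (div_nonneg hb.le hab.le) (by field_simp)
  have e : a / (a + b) * (a⁻¹ * u) + b / (a + b) * (b⁻¹ * v) = (a + b)⁻¹ * (u + v) := by
    field_simp
  simp only [smul_eq_mul, e] at h
  calc a * negMulLog (a⁻¹ * u) + b * negMulLog (b⁻¹ * v)
      = (a + b) * (a / (a + b) * negMulLog (a⁻¹ * u) + b / (a + b) * negMulLog (b⁻¹ * v)) := by
        field_simp
    _ ≤ _ := mul_le_mul_of_nonneg_left h hab.le

lemma info_add_le {f g : α → ℝ} (hf : 0 ≤ f) (hg : 0 ≤ g) : info (f + g) ≤ info f + info g := by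
  rcases (Fintype.sum_nonneg hf).eq_or_lt with ha | ha
  · rw [((Fintype.sum_eq_zero_iff_of_nonneg hf).1 ha.symm)]; simp
  rcases (Fintype.sum_nonneg hg).eq_or_lt with hb | hb
  · rw [((Fintype.sum_eq_zero_iff_of_nonneg hg).1 hb.symm)]; simp
  have hab : ∑ x, (f + g) x = ∑ x, f x + ∑ x, g x := by simp [sum_add_distrib]
  rw [info_eq_mul_of_sum_ne_zero ha.ne', info_eq_mul_of_sum_ne_zero hb.ne',
    info_eq_mul_of_sum_ne_zero (by rw [hab]; positivity), hab]
  have := sum_le_sum fun x (_ : x ∈ univ) =>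
    mul_negMulLog_inv_mul_add_le ha hb (hf x) (hg x)
  simp only [sum_add_distrib, ← mul_sum, Pi.add_apply] at this ⊢
  linarith

lemma info_sum_smul_le {ι : Type*} (s : Finset ι) {c : ι → ℝ} {F : ι → α → ℝ}
    (hc : ∀ i ∈ s, 0 ≤ c i) (hF : ∀ i ∈ s, 0 ≤ F i) :
    info (∑ i ∈ s, c i • F i) ≤ ∑ i ∈ s, c i * info (F i) := by
  classical
  induction s using Finset.induction_on with
  | empty => simp
  | insert i s hi ih =>
    rw [forall_mem_insert] at hc hF
    rw [sum_insert hi, sum_insert hi, ← info_smul]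
    exact (info_add_le (smul_nonneg hc.1 hF.1) (sum_nonneg fun j hj => smul_nonneg (hc.2 j hj)
      (hF.2 j hj))).trans (add_le_add le_rfl (ih hc.2 hF.2))

end Info

section Bits

def tailSlice {n : ℕ} (f : (Fin (n + 1) → Bool) → ℝ) (b : Bool) : (Fin n → Bool) → ℝ :=
  fun x => f (Fin.cons b x)

noncomputable def headMarginal {n : ℕ} (f : (Fin (n + 1) → Bool) → ℝ) : Bool → ℝ :=
  fun b => ∑ x, tailSlice f b x

noncomputable def bitFlip (p : ℝ) (g : Bool → ℝ) : Bool → ℝ :=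
  fun b => ∑ b', g b' * if b = b' then 1 - p else p

variable {n : ℕ} {p : ℝ}

lemma sum_eq_sum_sum_tailSlice (f : (Fin (n + 1) → Bool) → ℝ) :
    ∑ x, f x = ∑ b, ∑ x, tailSlice f b x := by
  rw [← (Fin.consEquiv fun _ => Bool).sum_comp, Fintype.sum_prod_type]
  rfl

lemma info_eq_info_headMarginal_add (f : (Fin (n + 1) → Bool) → ℝ) :
    info f = info (headMarginal f) + ∑ b, info (tailSlice f b) := by
  have hcard (m : ℕ) : log (Fintype.card (Fin m → Bool)) = m * log 2 := by simp
  simp only [info, hcard, Fintype.card_bool, headMarginal]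
  rw [sum_eq_sum_sum_tailSlice f, sum_eq_sum_sum_tailSlice fun x => negMulLog (f x)]
  simp only [Fintype.sum_bool, tailSlice]
  push_cast
  ring

lemma flipDist_nonneg (hp0 : 0 ≤ p) (hp1 : p ≤ 1) {f : (Fin n → Bool) → ℝ} (hf : 0 ≤ f) :
    0 ≤ flipDist p f := fun y =>
  sum_nonneg fun x _ => mul_nonneg (hf x) <| prod_nonneg fun i _ => by split <;> linarith

lemma sum_flipDist (p : ℝ) (f : (Fin n → Bool) → ℝ) : ∑ y, flipDist p f y = ∑ x, f x := by
  have hrow (x : Fin n → Bool) :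
      ∑ y : Fin n → Bool, ∏ i, (if y i = x i then 1 - p else p) = 1 := by
    rw [← Fintype.piFinset_univ,
      ← prod_univ_sum (t := fun _ => univ) (f := fun i b => if b = x i then 1 - p else p)]
    refine prod_eq_one fun i _ => ?_
    cases x i <;> simp
  simp only [flipDist]
  rw [sum_comm]
  simp [← mul_sum, hrow]

lemma tailSlice_flipDist (p : ℝ) (f : (Fin (n + 1) → Bool) → ℝ) (b : Bool) :
    tailSlice (flipDist p f) b =
      ∑ b', (if b = b' then 1 - p else p) • flipDist p (tailSlice f b') := by
  funext y
  simp only [tailSlice, flipDist, Finset.sum_apply, Pi.smul_apply, smul_eq_mul, mul_sum]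
  rw [sum_eq_sum_sum_tailSlice]
  refine sum_congr rfl fun b' _ => sum_congr rfl fun x _ => ?_
  simp only [tailSlice, Fin.prod_univ_succ, Fin.cons_zero, Fin.cons_succ]
  ring

lemma headMarginal_flipDist (p : ℝ) (f : (Fin (n + 1) → Bool) → ℝ) :
    headMarginal (flipDist p f) = bitFlip p (headMarginal f) := by
  funext b
  simp only [headMarginal, tailSlice_flipDist, bitFlip, Finset.sum_apply, Pi.smul_apply,
    smul_eq_mul]
  rw [sum_comm]
  simp only [← sum_mul, sum_flipDist, mul_comm]

lemma bitFlip_apply_true (p : ℝ) (g : Bool → ℝ) :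
    bitFlip p g true = g true * (1 - p) + g false * p := by
  simp [bitFlip]

lemma bitFlip_apply_false (p : ℝ) (g : Bool → ℝ) :
    bitFlip p g false = g true * p + g false * (1 - p) := by
  simp [bitFlip]

lemma bitFlip_smul (p c : ℝ) (g : Bool → ℝ) : bitFlip p (c • g) = c • bitFlip p g := by
  funext b
  simp only [bitFlip, Pi.smul_apply, smul_eq_mul, mul_sum, mul_assoc]

lemma info_eq_log_two_sub_binEntropy {g : Bool → ℝ} (hg : g true + g false = 1) :
    info g = log 2 - binEntropy (g true) := by
  rw [info_of_sum_eq_one (by rwa [Fintype.sum_bool]),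
    binEntropy_eq_negMulLog_add_negMulLog_one_sub, ← hg]
  simp

lemma info_bitFlip_le_of_sum_eq_one (hp0 : 0 ≤ p) (hp1 : p ≤ 1) {g : Bool → ℝ} (hg : 0 ≤ g)
    (hg1 : g true + g false = 1) :
    info (bitFlip p g) ≤ (1 - 2 * p) ^ 2 * info g := by
  have hfalse : g false = 1 - g true := by linarith
  have htrue0 : 0 ≤ g true := hg true
  have hfalse0 : 0 ≤ g false := hg false
  have htrue : bitFlip p g true = (1 + (1 - 2 * p) * (2 * g true - 1)) / 2 := by
    rw [bitFlip_apply_true, hfalse]; ring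
  rw [info_eq_log_two_sub_binEntropy hg1, info_eq_log_two_sub_binEntropy, htrue]
  · convert log_two_sub_binEntropy_mul_le (l := 1 - 2 * p) (s := 2 * g true - 1)
      (abs_le.2 ⟨by linarith, by linarith⟩) (abs_le.2 ⟨by linarith, by linarith⟩) using 4
    ring
  · rw [bitFlip_apply_true, bitFlip_apply_false]
    linear_combination hg1

lemma info_bitFlip_le (hp0 : 0 ≤ p) (hp1 : p ≤ 1) {g : Bool → ℝ} (hg : 0 ≤ g) :
    info (bitFlip p g) ≤ (1 - 2 * p) ^ 2 * info g := by
  rcases (Fintype.sum_nonneg hg).eq_or_lt with ha | ha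
  · have hbitFlip_zero : bitFlip p 0 = 0 := funext fun b => by simp [bitFlip]
    simp [(Fintype.sum_eq_zero_iff_of_nonneg hg).1 ha.symm, hbitFlip_zero]
  set a := ∑ b, g b
  have hν : 0 ≤ a⁻¹ • g := smul_nonneg (inv_nonneg.2 ha.le) hg
  have hν1 : (a⁻¹ • g) true + (a⁻¹ • g) false = 1 := by
    simp only [Pi.smul_apply, smul_eq_mul, ← mul_add, ← Fintype.sum_bool]
    exact inv_mul_cancel₀ ha.ne'
  rw [← smul_inv_smul₀ ha.ne' g, bitFlip_smul, info_smul, info_smul, mul_left_comm]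
  exact mul_le_mul_of_nonneg_left (info_bitFlip_le_of_sum_eq_one hp0 hp1 hν hν1) ha.le

theorem info_flipDist_le (hp0 : 0 ≤ p) (hp1 : p ≤ 1) {f : (Fin n → Bool) → ℝ} (hf : 0 ≤ f) :
    info (flipDist p f) ≤ (1 - 2 * p) ^ 2 * info f := by
  induction n with
  | zero => simp [info_of_unique]
  | succ n ih =>
    have hslice (b : Bool) : 0 ≤ tailSlice f b := fun x => hf _
    have hw (b b' : Bool) : 0 ≤ if b = b' then 1 - p else p := by split <;> linarith
    calc info (flipDist p f)
        = info (bitFlip p (headMarginal f))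
          + ∑ b, info (∑ b', (if b = b' then 1 - p else p) • flipDist p (tailSlice f b')) := by
          simp only [info_eq_info_headMarginal_add (flipDist p f), headMarginal_flipDist,
            tailSlice_flipDist]
      _ ≤ (1 - 2 * p) ^ 2 * info (headMarginal f)
          + ∑ b, ∑ b', (if b = b' then 1 - p else p) * info (flipDist p (tailSlice f b')) := by
          gcongr with b
          · exact info_bitFlip_le hp0 hp1 fun b => Fintype.sum_nonneg (hslice b)
          · exact info_sum_smul_le _ (fun b' _ => hw b b')
              fun b' _ => flipDist_nonneg hp0 hp1 (hslice b')
      _ = (1 - 2 * p) ^ 2 * info (headMarginal f) + ∑ b, info (flipDist p (tailSlice f b)) := by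
          simp only [Fintype.sum_bool, if_true, Bool.true_eq_false, Bool.false_eq_true, if_false]
          ring
      _ ≤ (1 - 2 * p) ^ 2 * info (headMarginal f)
          + ∑ b, (1 - 2 * p) ^ 2 * info (tailSlice f b) := by
          gcongr with b
          exact ih (hslice b)
      _ = (1 - 2 * p) ^ 2 * info f := by
          rw [info_eq_info_headMarginal_add f, mul_add, mul_sum]

lemma natCast_sub_shannonEnt {μ : (Fin n → Bool) → ℝ} (hμ1 : ∑ x, μ x = 1) :
    (n : ℝ) - shannonEnt μ = info μ / log 2 := by
  have hlog : log 2 ≠ 0 := (log_pos one_lt_two).ne'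
  rw [info_of_sum_eq_one hμ1]
  simp only [shannonEnt, logb, Fintype.card_fun, Fintype.card_bool, Fintype.card_fin,
    Nat.cast_pow, Nat.cast_ofNat, log_pow, negMulLog, mul_div_assoc', ← neg_div, ← sum_div]
  field_simp

end Bits

/-- Let `X` be a random string of `n` bits with distribution `μ`, and let `Y` be obtained
from `X` by flipping each bit independently with probability `p`, `0 < p < 1/2`.
Then `I(Y) ≤ (1−2p)²·I(X)`, where `I(Z) = n − H(Z)`. -/
theorem info_flip_string_le {n : ℕ} (p : ℝ) (hp0 : 0 < p) (hp1 : p < 1 / 2)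
    (μ : (Fin n → Bool) → ℝ) (hμ0 : ∀ x, 0 ≤ μ x) (hμ1 : ∑ x, μ x = 1) :
    (n : ℝ) - shannonEnt (flipDist p μ) ≤ (1 - 2 * p) ^ 2 * ((n : ℝ) - shannonEnt μ) := by
  rw [natCast_sub_shannonEnt hμ1, natCast_sub_shannonEnt ((sum_flipDist p μ).trans hμ1),
    mul_div_assoc']
  exact div_le_div_of_nonneg_right (info_flipDist_le hp0.le (by linarith) hμ0)
    (log_pos one_lt_two).le
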